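/- arXiv:2406.15427 — 6 statements merged into one kernel-verified Lean document; each statement's English description precedes it below -/
import Mathlib

section
/- For d ≥ 2 and any R > 0, every nonempty closed subset of a proper affine subspace of ℝ^d is an R-body. -/
open Metric Set

noncomputable section

abbrev Euc (d : ℕ) := EuclideanSpace ℝ (Fin d)

def nearR {d : ℕ} (R : ℝ) (A : Set (Euc d)) : Set (Euc d) := {x | infDist x A < R}
def primeR {d : ℕ} (R : ℝ) (A : Set (Euc d)) : Set (Euc d) := {x | R ≤ infDist x A}
def coR {d : ℕ} (R : ℝ) (E : Set (Euc d)) : Set (Euc d) :=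
  ⋂ x ∈ {c : Euc d | ball c R ∩ E = ∅}, (ball x R)ᶜ
def IsRBody {d : ℕ} (R : ℝ) (A : Set (Euc d)) : Prop :=
  A.Nonempty ∧ IsClosed A ∧ ∀ y ∉ A, ∃ c, y ∈ ball c R ∧ ball c R ∩ A = ∅
def suppVecs {d : ℕ} (R : ℝ) (A : Set (Euc d)) (a : Euc d) : Set (Euc d) :=
  {v | ‖v‖ = 1 ∧ A ⊆ (ball (a + R • v) R)ᶜ}
def fedTan {d : ℕ} (A : Set (Euc d)) (a : Euc d) : Set (Euc d) :=
  {v | ∀ ε > 0, ∃ x ∈ A ∩ ball a ε, ∃ r > 0, ‖r • (x - a) - v‖ < ε}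
def fedNor {d : ℕ} (A : Set (Euc d)) (a : Euc d) : Set (Euc d) :=
  {u | ∀ v ∈ fedTan A a, inner ℝ u v ≤ (0:ℝ)}
def reachAt {d : ℕ} (A : Set (Euc d)) (a : Euc d) : ℝ :=
  sSup {ρ : ℝ | 0 < ρ ∧ ∀ x ∈ ball a ρ, ∃! b, b ∈ A ∧ dist x b = infDist x A}
def reach {d : ℕ} (A : Set (Euc d)) : ℝ :=
  sInf {r : ℝ | ∃ a ∈ A, r = reachAt A a}

theorem stmt7 {d : ℕ} (hd : 2 ≤ d) (R : ℝ) (hR : 0 < R) (E : Set (Euc d))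
    (hE : E.Nonempty) (hEc : IsClosed E)
    (s : AffineSubspace ℝ (Euc d)) (hs : s ≠ ⊤) (hEs : E ⊆ s) :
    IsRBody R E := by
  refine ⟨hE, hEc, fun y hy => ?_⟩
  obtain ⟨e, he⟩ := hE
  have hp : e ∈ s := hEs he
  have hdir : s.direction ≠ ⊤ := fun h =>
    hs ((AffineSubspace.direction_eq_top_iff_of_nonempty ⟨e, hp⟩).mp h)
  have hbot : (s.direction)ᗮ ≠ ⊥ := by
    intro hb
    exact hdir (Submodule.orthogonal_eq_bot_iff.mp hb)
  obtain ⟨v0, hv0mem, hv0⟩ := Submodule.exists_mem_ne_zero_of_ne_bot hbot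
  set u : Euc d := ‖v0‖⁻¹ • v0 with hu_def
  have hu1 : ‖u‖ = 1 := norm_smul_inv_norm hv0
  have humem : u ∈ (s.direction)ᗮ := Submodule.smul_mem _ _ hv0mem
  set v : Euc d := if 0 ≤ (inner ℝ u (y - e) : ℝ) then u else -u with hv_def
  have hv1 : ‖v‖ = 1 := by
    rw [hv_def]; split <;> simp [hu1]
  have hvmem : v ∈ (s.direction)ᗮ := by
    rw [hv_def]; split
    · exact humem
    · exact Submodule.neg_mem _ humem
  have hvy : 0 ≤ (inner ℝ v (y - e) : ℝ) := by
    rw [hv_def]; split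
    case isTrue h => exact h
    case isFalse h => push_neg at h; rw [inner_neg_left]; linarith
  have hkey : ∀ x ∈ E, (inner ℝ v (x - y) : ℝ) ≤ 0 := by
    intro x hx
    have hxd : x - e ∈ s.direction := AffineSubspace.vsub_mem_direction (hEs hx) hp
    have h0 : (inner ℝ v (x - e) : ℝ) = 0 := by
      rw [real_inner_comm]
      exact (Submodule.mem_orthogonal _ _).mp hvmem _ hxd
    have hxyd : x - y = (x - e) - (y - e) := by abel
    rw [hxyd, inner_sub_right, h0]
    linarith
  set δ := infDist y E with hδ_def
  have hδ : 0 < δ := (hEc.notMem_iff_infDist_pos ⟨e, he⟩).mp hy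
  set t := min δ R / 2 with ht_def
  have ht0 : 0 < t := by
    have := lt_min hδ hR
    rw [ht_def]; linarith
  have htR : t < R := by
    have := min_le_right δ R
    rw [ht_def]; linarith
  have htδ : t < δ := by
    have := min_le_left δ R
    rw [ht_def]; linarith
  set h := Real.sqrt (R^2 - t^2) with hh_def
  have hhsq : h^2 = R^2 - t^2 := Real.sq_sqrt (by nlinarith)
  have hh0 : 0 ≤ h := Real.sqrt_nonneg _
  refine ⟨y + h • v, ?_, ?_⟩
  · rw [mem_ball, dist_eq_norm]
    have : y - (y + h • v) = -(h • v) := by abel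
    rw [this, norm_neg, norm_smul, hv1, Real.norm_eq_abs, abs_of_nonneg hh0, mul_one]
    nlinarith
  · rw [Set.eq_empty_iff_forall_notMem]
    rintro x ⟨hxb, hxE⟩
    rw [mem_ball, dist_eq_norm] at hxb
    have hxy : δ ≤ ‖x - y‖ := by
      have h1 : infDist y E ≤ dist y x := infDist_le_dist_of_mem hxE
      rwa [dist_eq_norm, ← norm_neg, neg_sub] at h1
    have hc : x - (y + h • v) = (x - y) - h • v := by abel
    have hexp : ‖x - (y + h • v)‖^2
        = ‖x - y‖^2 - 2 * (h * (inner ℝ (x - y) v : ℝ)) + h^2 := by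
      rw [hc, norm_sub_sq_real, real_inner_smul_right, norm_smul, Real.norm_eq_abs,
        abs_of_nonneg hh0, hv1, mul_one]
    have hnn : (0:ℝ) ≤ ‖x - (y + h • v)‖ := norm_nonneg _
    have hk2 : (inner ℝ (x - y) v : ℝ) ≤ 0 := by
      rw [real_inner_comm]; exact hkey x hxE
    nlinarith [hk2, hexp, hxb]
end
end

section
/- Let ρ ≥ R > 0. Every nonempty closed subset of the sphere ∂B(c,ρ) in ℝ^d (d ≥ 2) is an R-body. -/
open Metric Set

noncomputable section

set_option maxHeartbeats 1000000 in
theorem stmt8 {d : ℕ} (hd : 2 ≤ d) (R ρ : ℝ) (hR : 0 < R) (hρ : R ≤ ρ)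
    (c : Euc d) (E : Set (Euc d)) (hE : E.Nonempty) (hEc : IsClosed E)
    (hEs : E ⊆ sphere c ρ) :
    IsRBody R E := by
  have hρ0 : 0 < ρ := lt_of_lt_of_le hR hρ
  refine ⟨hE, hEc, ?_⟩
  intro y hy
  set t := dist y c with ht
  have htnn : 0 ≤ t := dist_nonneg
  have hyc : ‖y - c‖ = t := (dist_eq_norm y c).symm
  have hdpc : ∀ a : ℝ, dist (c + a • (y - c)) c = |a| * t := by
    intro a
    rw [dist_eq_norm, add_sub_cancel_left, norm_smul, hyc, Real.norm_eq_abs]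
  have hdyp : ∀ a : ℝ, dist y (c + a • (y - c)) = |1 - a| * t := by
    intro a
    have h1 : y - (c + a • (y - c)) = (1 - a) • (y - c) := by module
    rw [dist_eq_norm, h1, norm_smul, hyc, Real.norm_eq_abs]
  rcases lt_trichotomy t ρ with hlt | heq | hgt
  · -- y strictly inside the ball: slide towards c
    set s : ℝ := max 0 (t + R - ρ) with hs
    have hs0 : 0 ≤ s := le_max_left _ _
    have hs1 : t + R - ρ ≤ s := le_max_right _ _
    have hsR : s < R := by apply max_lt hR; linarith
    have hst : s ≤ t := by apply max_le htnn; linarith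
    by_cases ht0 : t = 0
    · refine ⟨c, ?_, ?_⟩
      · rw [mem_ball, ← ht, ht0]; exact hR
      · rw [Set.eq_empty_iff_forall_notMem]
        rintro z ⟨hz1, hz2⟩
        have hzs := hEs hz2
        rw [mem_sphere] at hzs
        rw [mem_ball] at hz1
        linarith
    · have ht0' : 0 < t := lt_of_le_of_ne htnn (Ne.symm ht0)
      set a : ℝ := (t - s) / t with ha
      refine ⟨c + a • (y - c), ?_, ?_⟩
      · rw [mem_ball, hdyp]
        have h1a : 1 - a = s / t := by
          rw [ha]; field_simp; ring
        rw [h1a, abs_of_nonneg (div_nonneg hs0 ht0'.le), div_mul_cancel₀ _ ht0]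
        exact hsR
      · rw [Set.eq_empty_iff_forall_notMem]
        rintro z ⟨hz1, hz2⟩
        have hzs := hEs hz2
        rw [mem_sphere] at hzs
        rw [mem_ball] at hz1
        have hpc : dist (c + a • (y - c)) c = t - s := by
          rw [hdpc, abs_of_nonneg (div_nonneg (by linarith) ht0'.le),
            div_mul_cancel₀ _ ht0]
        have htri : dist z c ≤ dist z (c + a • (y - c)) + dist (c + a • (y - c)) c :=
          dist_triangle _ _ _
        rw [hpc, hzs] at htri
        linarith
  · -- y on the sphere: externally tangent ball, pulled in slightly
    set δ : ℝ := infDist y E with hδdef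
    have hδ : 0 < δ := (hEc.notMem_iff_infDist_pos hE).mp hy
    set η : ℝ := min (R / 2) (δ ^ 2 / (2 * ρ)) with hη
    have hη0 : 0 < η := lt_min (by linarith) (by positivity)
    have hη1 : η ≤ R / 2 := min_le_left _ _
    have hη2' : η ≤ δ ^ 2 / (2 * ρ) := min_le_right _ _
    have hη2 : 2 * ρ * η ≤ δ ^ 2 := by
      rw [le_div_iff₀ (by positivity)] at hη2'
      linarith
    set a : ℝ := (ρ + R - η) / ρ with ha
    have ha1 : 1 ≤ a := by
      rw [ha, le_div_iff₀ hρ0]; linarith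
    have haR : R / ρ ≤ a := by
      rw [ha, div_le_div_iff₀ hρ0 hρ0]
      nlinarith [hη1, hρ0, hρ, hR]
    have h3 : ρ * (a - 1) = R - η := by
      rw [ha]; field_simp; ring
    refine ⟨c + a • (y - c), ?_, ?_⟩
    · rw [mem_ball, hdyp, heq]
      have h1a : 1 - a = (η - R) / ρ := by
        rw [ha]; field_simp; ring
      rw [h1a, abs_div, abs_of_nonneg hρ0.le, div_mul_cancel₀ _ (ne_of_gt hρ0),
        abs_of_nonpos (by linarith)]
      linarith
    · rw [Set.eq_empty_iff_forall_notMem]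
      rintro z ⟨hz1, hz2⟩
      have hzs := hEs hz2
      rw [mem_sphere] at hzs
      rw [mem_ball] at hz1
      have hdz : δ ≤ dist y z := infDist_le_dist_of_mem hz2
      have hwn : ‖y - c‖ = ρ := by rw [hyc, heq]
      have hvn : ‖z - c‖ = ρ := by rw [← dist_eq_norm, hzs]
      set I : ℝ := inner ℝ (y - c) (z - c) with hI
      have hinner : I ≤ ρ ^ 2 - δ ^ 2 / 2 := by
        have hexp : ‖(y - c) - (z - c)‖ ^ 2
            = ‖y - c‖ ^ 2 - 2 * I + ‖z - c‖ ^ 2 := norm_sub_sq_real _ _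
        have heq2 : (y - c) - (z - c) = y - z := by abel
        rw [heq2, hwn, hvn] at hexp
        have hyz : ‖y - z‖ = dist y z := (dist_eq_norm y z).symm
        nlinarith [hexp, hdz, hδ]
      set D : ℝ := ‖(c + a • (y - c)) - z‖ with hD
      have hDnn : 0 ≤ D := norm_nonneg _
      have hexp2 : D ^ 2 = a ^ 2 * ρ ^ 2 - 2 * a * I + ρ ^ 2 := by
        have hrw : (c + a • (y - c)) - z = a • (y - c) - (z - c) := by module
        rw [hD, hrw, norm_sub_sq_real, norm_smul, Real.norm_eq_abs, hwn, hvn,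
          real_inner_smul_left, mul_pow, sq_abs, hI]
        ring
      have ha0 : 0 < a := lt_of_lt_of_le one_pos ha1
      have h4 : ρ ^ 2 * (a - 1) ^ 2 = (R - η) ^ 2 := by
        calc ρ ^ 2 * (a - 1) ^ 2 = (ρ * (a - 1)) ^ 2 := by ring
          _ = (R - η) ^ 2 := by rw [h3]
      have h6 : 2 * R * η ≤ a * δ ^ 2 := by
        calc 2 * R * η = (R / ρ) * (2 * ρ * η) := by field_simp
          _ ≤ a * δ ^ 2 := mul_le_mul haR hη2 (by positivity) (by positivity)
      have hkey : R ^ 2 ≤ D ^ 2 := by nlinarith [hexp2, hinner, h4, h6, hη0, ha0]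
      have hz1' : D < R := by
        rw [hD, ← dist_eq_norm, dist_comm]; exact hz1
      nlinarith [hkey, hz1', hDnn, hR]
  · -- y outside the closed ball
    rcases le_or_gt (ρ + R) t with h1 | h2
    · refine ⟨y, mem_ball_self hR, ?_⟩
      rw [Set.eq_empty_iff_forall_notMem]
      rintro z ⟨hz1, hz2⟩
      have hzs := hEs hz2
      rw [mem_sphere] at hzs
      rw [mem_ball] at hz1
      have htri : t ≤ dist y z + dist z c := dist_triangle _ _ _
      rw [dist_comm] at hz1
      rw [hzs] at htri
      linarith
    · set a : ℝ := (ρ + R) / t with ha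
      have ht0 : 0 < t := by linarith
      refine ⟨c + a • (y - c), ?_, ?_⟩
      · rw [mem_ball, hdyp]
        have h1a : 1 - a = (t - (ρ + R)) / t := by
          rw [ha]; field_simp
        rw [h1a, abs_div, abs_of_nonneg ht0.le, div_mul_cancel₀ _ (ne_of_gt ht0),
          abs_of_nonpos (by linarith)]
        linarith
      · rw [Set.eq_empty_iff_forall_notMem]
        rintro z ⟨hz1, hz2⟩
        have hzs := hEs hz2
        rw [mem_sphere] at hzs
        rw [mem_ball] at hz1
        have hpc : dist (c + a • (y - c)) c = ρ + R := by
          rw [hdpc, abs_of_nonneg (by positivity), div_mul_cancel₀ _ (ne_of_gt ht0)]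
        have htri : dist (c + a • (y - c)) c ≤ dist (c + a • (y - c)) z + dist z c :=
          dist_triangle _ _ _
        rw [hpc, hzs, dist_comm] at htri
        linarith
end
end

section
/- If a closed set A in ℝ^d has reach(A) ≥ R, then A is an R-body. -/
set_option maxHeartbeats 1000000


open Metric Set
open scoped RealInnerProductSpace

noncomputable section

lemma stmt13_aux1 (m ε θ : ℝ) (hm : 0 < m) (hε : 0 < ε) (hθ : 0 < θ) (hθ1 : θ < 1) :
    (m + ε * (1 - θ)) ^ 2 ≤ m ^ 2 + 2 * (ε * m) + ε ^ 2 - ε * θ * m := by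
  nlinarith [mul_pos (mul_pos hε hm) hθ,
    mul_nonneg (mul_nonneg hε.le hε.le) (mul_nonneg hθ.le (by linarith : (0:ℝ) ≤ 2 - θ))]

theorem stmt13 {d : ℕ} (R : ℝ) (hR : 0 < R) (A : Set (Euc d)) (hA : IsClosed A)
    (hAne : A.Nonempty) (hreach : R ≤ reach A) :
    IsRBody R A := by
  -- Step 1: every point at distance < R from A has a unique nearest point.
  have hstar : ∀ x : Euc d, infDist x A < R →
      ∀ b b' : Euc d, b ∈ A → dist x b = infDist x A →
        b' ∈ A → dist x b' = infDist x A → b = b' := by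
    intro x hx b b' hb hbd hb' hbd'
    obtain ⟨a, ha, had⟩ := hA.exists_infDist_eq_dist hAne x
    have hdxa : dist x a < R := by rw [← had]; exact hx
    have hreach' : R ≤ sInf {r : ℝ | ∃ a ∈ A, r = reachAt A a} := hreach
    have hRa : R ≤ reachAt A a := by
      by_cases hbdd : BddBelow {r : ℝ | ∃ a ∈ A, r = reachAt A a}
      · exact le_trans hreach' (csInf_le hbdd ⟨a, ha, rfl⟩)
      · rw [Real.sInf_of_not_bddBelow hbdd] at hreach'; linarith
    have hRa' : R ≤ sSup {ρ : ℝ | 0 < ρ ∧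
        ∀ z ∈ ball a ρ, ∃! b, b ∈ A ∧ dist z b = infDist z A} := hRa
    set T := {ρ : ℝ | 0 < ρ ∧ ∀ z ∈ ball a ρ, ∃! b, b ∈ A ∧ dist z b = infDist z A} with hT
    have hρ0pos : 0 < (dist x a + R) / 2 := by linarith [dist_nonneg (x := x) (y := a)]
    have hρ0lt : (dist x a + R) / 2 < R := by linarith
    have hxmem : x ∈ ball a ((dist x a + R) / 2) := by
      rw [mem_ball]; linarith
    have hρ0T : (dist x a + R) / 2 ∈ T := by
      by_cases hbddT : BddAbove T
      · have hTne : T.Nonempty := by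
          by_contra hne
          rw [not_nonempty_iff_eq_empty] at hne
          rw [hne, Real.sSup_empty] at hRa'
          linarith
        obtain ⟨ρ', hρ'T, hρ'gt⟩ := exists_lt_of_lt_csSup hTne (lt_of_lt_of_le hρ0lt hRa')
        exact ⟨hρ0pos, fun z hz => hρ'T.2 z (ball_subset_ball hρ'gt.le hz)⟩
      · obtain ⟨ρ', hρ'T, hρ'gt⟩ := not_bddAbove_iff.mp hbddT ((dist x a + R) / 2)
        exact ⟨hρ0pos, fun z hz => hρ'T.2 z (ball_subset_ball hρ'gt.le hz)⟩
    obtain ⟨c, -, hcu⟩ := hρ0T.2 x hxmem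
    exact (hcu b ⟨hb, hbd⟩).trans (hcu b' ⟨hb', hbd'⟩).symm
  refine ⟨hAne, hA, ?_⟩
  intro y hy
  have hδpos : 0 < infDist y A := (hA.notMem_iff_infDist_pos hAne).mp hy
  set δ := infDist y A with hδ
  by_cases hcase : R ≤ δ
  · refine ⟨y, mem_ball_self hR, ?_⟩
    rw [eq_empty_iff_forall_notMem]
    rintro b ⟨hb1, hb2⟩
    have h1 : δ ≤ dist y b := infDist_le_dist_of_mem hb2
    rw [mem_ball, dist_comm] at hb1
    linarith
  push_neg at hcase
  have hRδ : 0 < R - δ := by linarith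
  set lam := (R / (R - δ) + 1) / 2 with hlam
  have hlam1 : 1 < lam := by
    have h1 : 1 < R / (R - δ) := (one_lt_div hRδ).mpr (by linarith)
    rw [hlam]; linarith
  have hlampos : 0 < lam := by linarith
  have hlamR : lam * (R - δ) < R := by
    have h1 : R / (R - δ) * (R - δ) = R := div_mul_cancel₀ _ hRδ.ne'
    have h2 : lam * (R - δ) = (R + (R - δ)) / 2 := by
      rw [hlam]; nlinarith [h1]
    rw [h2]; linarith
  set K := {c : Euc d | dist c y ≤ lam * (infDist c A - δ) ∧ infDist c A ≤ R} with hK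
  have hyK : y ∈ K := by
    constructor
    · simp [dist_self, ← hδ]
    · exact hcase.le
  have hKsub : K ⊆ closedBall y (lam * (R - δ)) := by
    rintro c ⟨h1, h2⟩
    rw [mem_closedBall]
    calc dist c y ≤ lam * (infDist c A - δ) := h1
      _ ≤ lam * (R - δ) := by
          apply mul_le_mul_of_nonneg_left _ hlampos.le
          linarith
  have hKclosed : IsClosed K := by
    have h1 : IsClosed {c : Euc d | dist c y ≤ lam * (infDist c A - δ)} :=
      isClosed_le (Continuous.dist continuous_id continuous_const)
        (continuous_const.mul ((continuous_infDist_pt A).sub continuous_const))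
    have h2 : IsClosed {c : Euc d | infDist c A ≤ R} :=
      isClosed_le (continuous_infDist_pt A) continuous_const
    exact h1.inter h2
  have hKcomp : IsCompact K :=
    (isCompact_closedBall y (lam * (R - δ))).of_isClosed_subset hKclosed hKsub
  obtain ⟨c₀, hc₀K, hc₀max⟩ := hKcomp.exists_isMaxOn ⟨y, hyK⟩
    ((continuous_infDist_pt A).continuousOn)
  set m := infDist c₀ A with hm
  have hmR : m ≤ R := hc₀K.2
  have hmδ : δ ≤ m := by
    have h0 : (0 : ℝ) ≤ dist c₀ y := dist_nonneg
    have h1 := hc₀K.1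
    nlinarith
  have hmpos : 0 < m := lt_of_lt_of_le hδpos hmδ
  rcases eq_or_lt_of_le hmR with hmR' | hmR'
  · -- the maximum equals R : done
    refine ⟨c₀, ?_, ?_⟩
    · rw [mem_ball, dist_comm]
      calc dist c₀ y ≤ lam * (m - δ) := hc₀K.1
        _ = lam * (R - δ) := by rw [hmR']
        _ < R := hlamR
    · rw [eq_empty_iff_forall_notMem]
      rintro b ⟨hb1, hb2⟩
      have h1 : m ≤ dist c₀ b := infDist_le_dist_of_mem hb2
      rw [mem_ball, dist_comm] at hb1
      rw [hmR'] at h1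
      linarith
  · exfalso
    obtain ⟨a, haA, haD⟩ := hA.exists_infDist_eq_dist hAne c₀
    set v := c₀ - a with hv
    have hvnorm : ‖v‖ = m := by rw [hv, ← dist_eq_norm, ← haD]
    set θ := (lam - 1) / (2 * lam) with hθ
    have hθpos : 0 < θ := by apply div_pos <;> linarith
    have hθ1 : θ < 1 := by
      rw [hθ, div_lt_one (by linarith)]; linarith
    have hlamθ : 1 ≤ lam * (1 - θ) := by
      have h1 : lam * (1 - θ) = (lam + 1) / 2 := by
        rw [hθ]; field_simp; ring
      rw [h1]; linarith
    set η := θ * m / 2 with hη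
    have hηpos : 0 < η := by
      rw [hη]; positivity
    have hproj : ∀ b ∈ A, dist c₀ b = m → b = a := by
      intro b hb hbd
      exact hstar c₀ (by rw [← hm]; exact hmR') b a hb (by rw [hbd, hm]) haA haD.symm
    -- choose ε₀ so that nearest points of perturbations are η-close to a
    obtain ⟨ε₀, hε₀pos, hε₀⟩ : ∃ ε₀ > 0, ∀ ε : ℝ, 0 < ε → ε ≤ ε₀ → ε ≤ 1/2 →
        ∀ b ∈ A, dist (c₀ + (ε / m) • v) b = infDist (c₀ + (ε / m) • v) A →
          dist b a ≤ η := by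
      have hdca : ∀ ε : ℝ, 0 < ε → dist (c₀ + (ε / m) • v) a = m + ε := by
        intro ε hεp
        have hc'a : c₀ + (ε / m) • v - a = (1 + ε / m) • v := by
          rw [hv]; module
        rw [dist_eq_norm, hc'a, norm_smul, hvnorm, Real.norm_eq_abs,
          abs_of_nonneg (by positivity)]
        field_simp
      have hdcc : ∀ ε : ℝ, 0 < ε → dist (c₀ + (ε / m) • v) c₀ = ε := by
        intro ε hεp
        have h1 : c₀ + (ε / m) • v - c₀ = (ε / m) • v := by module
        rw [dist_eq_norm, h1, norm_smul, hvnorm, Real.norm_eq_abs,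
          abs_of_nonneg (by positivity)]
        field_simp
      have hnearb : ∀ ε : ℝ, 0 < ε → ∀ b ∈ A,
          dist (c₀ + (ε / m) • v) b = infDist (c₀ + (ε / m) • v) A →
          dist c₀ b ≤ m + 2 * ε := by
        intro ε hεp b hb hbd
        have h1 : infDist (c₀ + (ε / m) • v) A ≤ m + ε := by
          rw [← hdca ε hεp]; exact infDist_le_dist_of_mem haA
        have h2 := dist_triangle c₀ (c₀ + (ε / m) • v) b
        rw [dist_comm c₀ (c₀ + (ε / m) • v), hdcc ε hεp] at h2
        rw [hbd] at *
        linarith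
      by_cases hS : (A ∩ closedBall c₀ (m + 1) ∩ {b | η ≤ dist b a}).Nonempty
      · have hScomp : IsCompact (A ∩ closedBall c₀ (m + 1) ∩ {b | η ≤ dist b a}) := by
          apply (isCompact_closedBall c₀ (m + 1)).of_isClosed_subset
          · exact (hA.inter isClosed_closedBall).inter
              (isClosed_le continuous_const (Continuous.dist continuous_id continuous_const))
          · intro b hb; exact hb.1.2
        obtain ⟨b₀, hb₀S, hb₀min⟩ := hScomp.exists_isMinOn hS
          ((Continuous.dist continuous_const continuous_id).continuousOn)
        have hμm : m < dist c₀ b₀ := by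
          have h1 : m ≤ dist c₀ b₀ := infDist_le_dist_of_mem hb₀S.1.1
          rcases h1.lt_or_eq with h | h
          · exact h
          · exfalso
            have hba := hproj b₀ hb₀S.1.1 h.symm
            have h2 := hb₀S.2
            rw [hba] at h2
            simp [dist_self] at h2
            linarith
        refine ⟨(dist c₀ b₀ - m) / 3, by linarith, ?_⟩
        intro ε hεpos hεle hεhalf b hbA hbnear
        by_contra hcon
        push_neg at hcon
        have hd2 := hnearb ε hεpos b hbA hbnear
        have hbS : b ∈ A ∩ closedBall c₀ (m + 1) ∩ {b | η ≤ dist b a} := by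
          refine ⟨⟨hbA, ?_⟩, hcon.le⟩
          rw [mem_closedBall, dist_comm]
          linarith
        have h3 : dist c₀ b₀ ≤ dist c₀ b := hb₀min hbS
        linarith
      · refine ⟨1/2, by norm_num, ?_⟩
        intro ε hεpos hεle hεhalf b hbA hbnear
        by_contra hcon
        push_neg at hcon
        have hd2 := hnearb ε hεpos b hbA hbnear
        exact hS ⟨b, ⟨hbA, by rw [mem_closedBall, dist_comm]; linarith⟩, hcon.le⟩
    set ε := min (min ε₀ (1/2)) (min ((R - m) / 2) m) with hε
    have hεpos : 0 < ε :=
      lt_min (lt_min hε₀pos (by norm_num)) (lt_min (by linarith) hmpos)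
    have hεε₀ : ε ≤ ε₀ := le_trans (min_le_left _ _) (min_le_left _ _)
    have hεhalf : ε ≤ 1/2 := le_trans (min_le_left _ _) (min_le_right _ _)
    have hεRm : ε ≤ (R - m) / 2 := le_trans (min_le_right _ _) (min_le_left _ _)
    have hεm : ε ≤ m := le_trans (min_le_right _ _) (min_le_right _ _)
    set c' := c₀ + (ε / m) • v with hc'
    obtain ⟨b, hbA, hbD⟩ := hA.exists_infDist_eq_dist hAne c'
    have hba : dist b a ≤ η := hε₀ ε hεpos hεε₀ hεhalf b hbA hbD.symm
    -- key inequality: infDist c' A ≥ m + ε(1-θ)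
    have hkey : (m + ε * (1 - θ)) ^ 2 ≤ (dist c' b) ^ 2 := by
      have h1 : m ≤ ‖c₀ - b‖ := by
        rw [← dist_eq_norm]
        exact le_trans (le_of_eq hm) (infDist_le_dist_of_mem hbA)
      have hsplit : c₀ - b = v + (a - b) := by rw [hv]; module
      have hq : -(‖a - b‖ * m) ≤ ⟪a - b, v⟫ := by
        have h2 := abs_real_inner_le_norm (a - b) v
        rw [hvnorm] at h2
        linarith [neg_abs_le (⟪a - b, v⟫)]
      have hn : ‖a - b‖ ≤ η := by
        rw [← dist_eq_norm, dist_comm]; exact hba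
      have hexp : dist c' b = ‖(c₀ - b) + (ε / m) • v‖ := by
        rw [dist_eq_norm, hc']
        congr 1
        module
      have hinner : ⟪c₀ - b, v⟫ = m ^ 2 + ⟪a - b, v⟫ := by
        rw [hsplit, inner_add_left, real_inner_self_eq_norm_sq, hvnorm]
      have hdivm : ε / m * m = ε := div_mul_cancel₀ _ hmpos.ne'
      rw [hexp, norm_add_sq_real, real_inner_smul_right, norm_smul, Real.norm_eq_abs,
        abs_of_nonneg (by positivity), hvnorm, hinner, hdivm]
      have hq2 : -(ε * ‖a - b‖) ≤ ε / m * ⟪a - b, v⟫ := by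
        have h3 : ε / m * (-(‖a - b‖ * m)) ≤ ε / m * ⟪a - b, v⟫ :=
          mul_le_mul_of_nonneg_left hq (by positivity)
        calc -(ε * ‖a - b‖) = ε / m * (-(‖a - b‖ * m)) := by
              field_simp
          _ ≤ ε / m * ⟪a - b, v⟫ := h3
      have hsplit2 : ε / m * (m ^ 2 + ⟪a - b, v⟫) = ε * m + ε / m * ⟪a - b, v⟫ := by
        field_simp
      have hC2 : m ^ 2 ≤ ‖c₀ - b‖ ^ 2 := pow_le_pow_left₀ hmpos.le h1 2
      have hNb : ε * ‖a - b‖ ≤ ε * (θ * m / 2) := by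
        apply mul_le_mul_of_nonneg_left _ hεpos.le
        rw [hη] at hn; exact hn
      have hstep : m ^ 2 + 2 * (ε * m + ε / m * ⟪a - b, v⟫) + ε ^ 2
          ≤ ‖c₀ - b‖ ^ 2 + 2 * (ε * m + ε / m * ⟪a - b, v⟫) + ε ^ 2 := by linarith
      rw [hsplit2]
      refine le_trans ?_ hstep
      linarith only [hq2, hNb, stmt13_aux1 m ε θ hmpos hεpos hθpos hθ1]
    have hd'pos : (0:ℝ) ≤ m + ε * (1 - θ) := by
      have h9 : 0 < ε * (1 - θ) := mul_pos hεpos (by linarith)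
      linarith only [h9, hmpos]
    have hd'ge : m + ε * (1 - θ) ≤ dist c' b :=
      le_of_pow_le_pow_left₀ two_ne_zero dist_nonneg hkey
    have hinf' : m + ε * (1 - θ) ≤ infDist c' A := by rw [hbD]; exact hd'ge
    have hinfR : infDist c' A ≤ m + ε := by
      have h1 : dist c' a = m + ε := by
        have hc'a : c' - a = (1 + ε / m) • v := by rw [hc', hv]; module
        rw [dist_eq_norm, hc'a, norm_smul, hvnorm, Real.norm_eq_abs,
          abs_of_nonneg (by positivity)]
        field_simp
      rw [← h1]
      exact infDist_le_dist_of_mem haA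
    have hc'K : c' ∈ K := by
      constructor
      · have h1 : dist c' y ≤ dist c' c₀ + dist c₀ y := dist_triangle c' c₀ y
        have h2 : dist c' c₀ = ε := by
          have h3 : c' - c₀ = (ε / m) • v := by rw [hc']; module
          rw [dist_eq_norm, h3, norm_smul, hvnorm, Real.norm_eq_abs,
            abs_of_nonneg (by positivity)]
          field_simp
        have h4 : dist c₀ y ≤ lam * (m - δ) := hc₀K.1
        have h5 : lam * (m - δ) + lam * (ε * (1 - θ)) ≤ lam * (infDist c' A - δ) := by
          have h5' : lam * (m + ε * (1 - θ) - δ) ≤ lam * (infDist c' A - δ) :=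
            mul_le_mul_of_nonneg_left (by linarith) hlampos.le
          calc lam * (m - δ) + lam * (ε * (1 - θ)) = lam * (m + ε * (1 - θ) - δ) := by ring
            _ ≤ lam * (infDist c' A - δ) := h5'
        have h6 : ε ≤ lam * (ε * (1 - θ)) := by
          calc ε = 1 * ε := (one_mul ε).symm
            _ ≤ lam * (1 - θ) * ε := mul_le_mul_of_nonneg_right hlamθ hεpos.le
            _ = lam * (ε * (1 - θ)) := by ring
        linarith
      · linarith
    have h7 : infDist c' A ≤ infDist c₀ A := hc₀max hc'K
    have h8 : 0 < ε * (1 - θ) := mul_pos hεpos (by linarith)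
    rw [← hm] at h7
    linarith
end
end

section
/- Let E be an R-supported body and A = co_R(E). Then ∂E ⊂ ∂A, int(E) ⊂ int(A), and for every a ∈ ∂E the sets of R-supporting unit vectors coincide: 𝒩_R(E,a) = 𝒩_R(A,a). -/
open Metric Set

noncomputable section

lemma subset_coR {d : ℕ} (R : ℝ) (E : Set (Euc d)) : E ⊆ coR R E := by
  intro x hx
  refine mem_iInter₂.2 fun c hc => ?_
  intro hxb
  exact absurd (Set.mem_inter hxb hx) (by rw [hc]; exact notMem_empty x)

lemma coR_subset {d : ℕ} {R : ℝ} {E : Set (Euc d)} {c : Euc d}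
    (h : ball c R ∩ E = ∅) : coR R E ⊆ (ball c R)ᶜ := by
  intro x hx
  exact mem_iInter₂.1 hx c h

theorem stmt15 {d : ℕ} (R : ℝ) (hR : 0 < R) (E : Set (Euc d)) (hE : IsClosed E)
    (hEne : E.Nonempty) (hsupp : ∀ e ∈ frontier E, (suppVecs R E e).Nonempty)
    (A : Set (Euc d)) (hAdef : A = coR R E) :
    frontier E ⊆ frontier A ∧ interior E ⊆ interior A ∧
      ∀ a ∈ frontier E, suppVecs R E a = suppVecs R A a := by
  subst hAdef
  have hEA : E ⊆ coR R E := subset_coR R E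
  have key : ∀ a : Euc d, ∀ v : Euc d, ‖v‖ = 1 → E ⊆ (ball (a + R • v) R)ᶜ →
      coR R E ⊆ (ball (a + R • v) R)ᶜ := by
    intro a v hv hEv
    apply coR_subset
    ext x
    simp only [mem_inter_iff, mem_empty_iff_false, iff_false, not_and]
    intro hxb hxE
    exact hEv hxE hxb
  have hdist : ∀ (a v : Euc d) (t : ℝ), ‖v‖ = 1 →
      dist (a + t • v) (a + R • v) = |t - R| := by
    intro a v t hv
    rw [dist_eq_norm, add_sub_add_left_eq_sub, ← sub_smul, norm_smul, hv,
      mul_one, Real.norm_eq_abs]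
  refine ⟨?_, interior_mono hEA, ?_⟩
  · intro a ha
    have haE : a ∈ E := hE.frontier_subset ha
    obtain ⟨v, hv, hEv⟩ := hsupp a ha
    have hAv : coR R E ⊆ (ball (a + R • v) R)ᶜ := key a v hv hEv
    constructor
    · exact subset_closure (hEA haE)
    · -- a ∉ interior (coR R E): points a + t•v for small t > 0 are outside
      intro hint
      obtain ⟨ε, hε, hball⟩ := Metric.isOpen_iff.1 isOpen_interior a hint
      set t := min (ε / 2) R with ht
      have ht0 : 0 < t := lt_min (by linarith) hR
      have htR : t ≤ R := min_le_right _ _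
      have hmem : a + t • v ∈ ball a ε := by
        rw [mem_ball, dist_eq_norm, add_sub_cancel_left, norm_smul, hv,
          mul_one, Real.norm_eq_abs, abs_of_pos ht0]
        calc t ≤ ε / 2 := min_le_left _ _
        _ < ε := by linarith
      have hinb : a + t • v ∈ ball (a + R • v) R := by
        rw [mem_ball, hdist a v t hv, abs_of_nonpos (by linarith)]
        linarith
      exact hAv (interior_subset (hball hmem)) hinb
  · intro a ha
    ext v
    constructor
    · rintro ⟨hv, hEv⟩
      exact ⟨hv, key a v hv hEv⟩
    · rintro ⟨hv, hAv⟩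
      exact ⟨hv, fun x hx => hAv (hEA hx)⟩
end
end

section
/- Let E be a closed set in ℝ^d, a ∈ ∂(co_R(E)) with a ∉ E, and B = B(o,R) an open ball R-supporting co_R(E) at a (i.e. a ∈ ∂B and B ∩ co_R(E) = ∅). Then ∂E ∩ ∂B contains at least two points. -/
open Metric Set

noncomputable section

local notation "⟪" x ", " y "⟫" => @inner ℝ _ _ x y

set_option maxHeartbeats 1000000

lemma key {d : ℕ} {R : ℝ} (hR : 0 < R) {E : Set (Euc d)} (hE : IsClosed E)
    {a c x : Euc d} (hax : a ≠ x) (hxc : dist x c = R) (hac : dist a c = R)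
    (hdisjE : ball c R ∩ E = ∅) (hsub : ∀ y ∈ E ∩ sphere c R, y = x)
    (haco : a ∈ coR R E) : False := by
  set w : Euc d := a - x with hwdef
  have hwpos : 0 < ‖w‖ := by rw [norm_pos_iff]; exact sub_ne_zero.mpr hax
  set s : ℝ := ‖w‖ ^ 2 / 2 with hsdef
  have hspos : 0 < s := by positivity
  have ha' : ‖a - c‖ = R := by rw [← dist_eq_norm]; exact hac
  have hx' : ‖x - c‖ = R := by rw [← dist_eq_norm]; exact hxc
  have e1 : ‖(a - c) - w‖ ^ 2 = ‖a - c‖ ^ 2 - 2 * ⟪a - c, w⟫ + ‖w‖ ^ 2 :=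
    @norm_sub_sq_real _ _ _ _ _
  have e2 : ‖(x - c) + w‖ ^ 2 = ‖x - c‖ ^ 2 + 2 * ⟪x - c, w⟫ + ‖w‖ ^ 2 :=
    @norm_add_sq_real _ _ _ _ _
  have e1' : (a - c) - w = x - c := by rw [hwdef]; abel
  have e2' : (x - c) + w = a - c := by rw [hwdef]; abel
  rw [e1', ha', hx'] at e1
  rw [e2', ha', hx'] at e2
  have hiaw : ⟪a - c, w⟫ = s := by rw [hsdef]; linarith
  have hixw : ⟪x - c, w⟫ = -s := by rw [hsdef]; linarith
  set r : ℝ := s / (2 * ‖w‖) with hrdef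
  have hrpos : 0 < r := by positivity
  have hnotball : ∀ y ∈ E, R ≤ dist y c := by
    intro y hy
    by_contra hlt
    exact absurd (mem_inter (mem_ball.mpr (lt_of_not_ge hlt)) hy)
      (by rw [hdisjE]; exact notMem_empty y)
  have hE'far : ∀ y ∈ E \ ball x r, R < dist y c := by
    intro y ⟨hyE, hyx⟩
    rcases lt_or_eq_of_le (hnotball y hyE) with h | h
    · exact h
    · exfalso
      have : y = x := hsub y ⟨hyE, mem_sphere.mpr h.symm⟩
      exact hyx (by simp [this, mem_ball, hrpos])
  obtain ⟨δ, hδpos, hδ⟩ : ∃ δ > 0, ∀ y ∈ E \ ball x r, R + δ ≤ dist y c := by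
    rcases (E \ ball x r).eq_empty_or_nonempty with he | hne
    · exact ⟨1, one_pos, by simp [he]⟩
    · have hcl : IsClosed (E \ ball x r) := by
        rw [diff_eq]; exact hE.inter isOpen_ball.isClosed_compl
      obtain ⟨y₀, hy₀, hy₀d⟩ := hcl.exists_infDist_eq_dist hne c
      refine ⟨dist y₀ c - R, by linarith [hE'far y₀ hy₀], fun y hy => ?_⟩
      have h3 : dist y₀ c ≤ dist y c := by
        rw [dist_comm y₀ c, dist_comm y c, ← hy₀d]
        exact infDist_le_dist_of_mem hy
      linarith
  set ε : ℝ := min (δ / (2 * ‖w‖)) (1 / 2) with hεdef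
  have hεpos : 0 < ε := lt_min (by positivity) (by norm_num)
  have hεlt1 : ε < 1 := lt_of_le_of_lt (min_le_right _ _) (by norm_num)
  have hεw : ε * ‖w‖ ≤ δ / 2 := by
    have := min_le_left (δ / (2 * ‖w‖)) (1 / 2)
    calc ε * ‖w‖ ≤ δ / (2 * ‖w‖) * ‖w‖ := by nlinarith
    _ = δ / 2 := by field_simp
  set c' : Euc d := c + ε • w with hc'def
  have hcc' : dist c' c = ε * ‖w‖ := by
    rw [dist_eq_norm]
    have : c' - c = ε • w := by rw [hc'def]; abel
    rw [this, norm_smul, Real.norm_eq_abs, abs_of_pos hεpos]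
  have hdisj' : ball c' R ∩ E = ∅ := by
    rw [eq_empty_iff_forall_notMem]
    rintro y ⟨hyb, hyE⟩
    rw [mem_ball] at hyb
    by_cases hyx : y ∈ ball x r
    · have hyc : R ≤ dist y c := hnotball y hyE
      have hinner : ⟪y - c, w⟫ ≤ -s / 2 := by
        have hsplit : ⟪y - c, w⟫ = ⟪y - x, w⟫ + ⟪x - c, w⟫ := by
          rw [← inner_add_left]; congr 1; abel
        have hcs : ⟪y - x, w⟫ ≤ ‖y - x‖ * ‖w‖ := real_inner_le_norm _ _
        have hyx' : ‖y - x‖ ≤ r := by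
          rw [← dist_eq_norm]; exact le_of_lt (mem_ball.mp hyx)
        have hrw : r * ‖w‖ = s / 2 := by rw [hrdef]; field_simp
        nlinarith
      have hdist2 : dist y c' ^ 2 = ‖y - c‖ ^ 2 - 2 * ε * ⟪y - c, w⟫ + ε ^ 2 * ‖w‖ ^ 2 := by
        rw [dist_eq_norm]
        have : y - c' = (y - c) - ε • w := by rw [hc'def]; abel
        rw [this, @norm_sub_sq_real, real_inner_smul_right, norm_smul,
          Real.norm_eq_abs, mul_pow, sq_abs]
        ring
      have hyc' : R ≤ ‖y - c‖ := by rw [← dist_eq_norm]; exact hyc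
      nlinarith [dist_nonneg (x := y) (y := c')]
    · have := hδ y ⟨hyE, hyx⟩
      have htri : dist y c ≤ dist y c' + dist c' c := dist_triangle y c' c
      rw [hcc'] at htri
      linarith
  have hnot : a ∉ ball c' R := by
    simp only [coR, mem_iInter, mem_setOf_eq] at haco
    simpa using haco c' hdisj'
  apply hnot
  rw [mem_ball]
  have hdist2 : dist a c' ^ 2 = ‖a - c‖ ^ 2 - 2 * ε * ⟪a - c, w⟫ + ε ^ 2 * ‖w‖ ^ 2 := by
    rw [dist_eq_norm]
    have : a - c' = (a - c) - ε • w := by rw [hc'def]; abel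
    rw [this, @norm_sub_sq_real, real_inner_smul_right, norm_smul,
      Real.norm_eq_abs, mul_pow, sq_abs]
    ring
  have ha' : ‖a - c‖ = R := by rw [← dist_eq_norm]; exact hac
  have hw2 : ‖w‖ ^ 2 = 2 * s := by rw [hsdef]; ring
  have : dist a c' ^ 2 < R ^ 2 := by
    rw [hdist2, ha', hiaw, hw2]
    nlinarith [mul_pos (mul_pos hεpos hspos) (sub_pos.mpr hεlt1)]
  nlinarith [dist_nonneg (x := a) (y := c'), hR]

theorem stmt16 {d : ℕ} (R : ℝ) (hR : 0 < R) (E : Set (Euc d)) (hE : IsClosed E)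
    (hEne : E.Nonempty) (a : Euc d) (ha : a ∈ frontier (coR R E)) (haE : a ∉ E)
    (c : Euc d) (hac : a ∈ sphere c R) (hdisj : ball c R ∩ coR R E = ∅) :
    ∃ x ∈ frontier E ∩ sphere c R, ∃ y ∈ frontier E ∩ sphere c R, x ≠ y := by
  have hac' : dist a c = R := mem_sphere.mp hac
  have hcoclosed : IsClosed (coR R E) :=
    isClosed_biInter (fun z _ => isOpen_ball.isClosed_compl)
  have haco : a ∈ coR R E := hcoclosed.closure_eq ▸ frontier_subset_closure ha
  have hEsub : E ⊆ coR R E := by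
    intro y hy
    simp only [coR, mem_iInter, mem_setOf_eq, mem_compl_iff]
    intro z hz hyb
    exact (hz ▸ notMem_empty y) (mem_inter hyb hy)
  have hEball : ball c R ∩ E = ∅ := by
    rw [eq_empty_iff_forall_notMem]
    rintro y ⟨h1, h2⟩
    exact (hdisj ▸ notMem_empty y) (mem_inter h1 (hEsub h2))
  have hfr : ∀ y ∈ E ∩ sphere c R, y ∈ frontier E := by
    rintro y ⟨hyE, hys⟩
    rw [hE.frontier_eq]
    refine ⟨hyE, fun hint => ?_⟩
    obtain ⟨ρ, hρ, hball⟩ := Metric.isOpen_iff.mp isOpen_interior y hint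
    have hycl : y ∈ closure (ball c R) := by
      rw [closure_ball c hR.ne']
      exact mem_closedBall.mpr (le_of_eq (mem_sphere.mp hys))
    obtain ⟨z, hz1, hz2⟩ := (_root_.mem_closure_iff.mp hycl) (ball y ρ) isOpen_ball
      (mem_ball_self hρ)
    exact (hEball ▸ notMem_empty z) (mem_inter hz2 (interior_subset (hball hz1)))
  by_contra hcon
  push_neg at hcon
  rcases (E ∩ sphere c R).eq_empty_or_nonempty with he | ⟨x0, hx0⟩
  · have hax : a ≠ c + (c - a) := by
      intro h
      have h2 : (2 : ℝ) • (a - c) = 0 := by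
        have h4 : a - c = -(a - c) := by
          conv_lhs => rw [h]
          abel
        rw [two_smul]
        nth_rewrite 2 [h4]
        abel
      have h3 : a - c = 0 := by
        rcases smul_eq_zero.mp h2 with h | h
        · norm_num at h
        · exact h
      have : dist a c = 0 := by rw [dist_eq_norm, h3, norm_zero]
      rw [hac'] at this
      exact hR.ne' this
    have hxc : dist (c + (c - a)) c = R := by
      rw [dist_eq_norm]
      have : c + (c - a) - c = -(a - c) := by abel
      rw [this, norm_neg, ← dist_eq_norm, hac']
    exact key hR hE hax hxc hac' hEball
      (fun y hy => absurd (he ▸ hy) (notMem_empty y)) haco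
  · have hax0 : a ≠ x0 := fun h => haE (h ▸ hx0.1)
    exact key hR hE hax0 (mem_sphere.mp hx0.2) hac' hEball
      (fun y hy => hcon y ⟨hfr y hy, hy.2⟩ x0 ⟨hfr x0 hx0, hx0.2⟩) haco
end
end

section
/- Let 𝒦 be a nonempty closed subset of S^{d−1} and C_𝒦 = ⋂_{v∈𝒦} (B(Rv,R))^c the associated R-cone with vertex o. If the open ball B(Rv,R) (v ∈ S^{d−1}) is disjoint from C_𝒦, i.e. v is an R-supporting unit vector of C_𝒦 at o, then v ∈ 𝒦. Hence 𝒩_R(C_𝒦, o) = 𝒦. -/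
open Metric Set

noncomputable section

theorem stmt17 {d : ℕ} (R : ℝ) (hR : 0 < R) (𝒦 : Set (Euc d)) (h𝒦ne : 𝒦.Nonempty)
    (h𝒦c : IsClosed 𝒦) (h𝒦s : 𝒦 ⊆ sphere (0 : Euc d) 1) :
    (∀ v : Euc d, ‖v‖ = 1 →
        ball (R • v) R ∩ (⋂ w ∈ 𝒦, (ball (R • w) R)ᶜ) = ∅ → v ∈ 𝒦) ∧
      suppVecs R (⋂ w ∈ 𝒦, (ball (R • w) R)ᶜ) 0 = 𝒦 := by
  have key : ∀ v : Euc d, ‖v‖ = 1 →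
      ball (R • v) R ∩ (⋂ w ∈ 𝒦, (ball (R • w) R)ᶜ) = ∅ → v ∈ 𝒦 := by
    intro v hv hdisj
    by_contra hvK
    have hcpt : IsCompact 𝒦 :=
      (isCompact_sphere (0 : Euc d) 1).of_isClosed_subset h𝒦c h𝒦s
    have hcont : Continuous fun w : Euc d => (inner ℝ v w : ℝ) :=
      continuous_const.inner continuous_id
    obtain ⟨w0, hw0K, hmax⟩ := hcpt.exists_isMaxOn h𝒦ne hcont.continuousOn
    set s : ℝ := inner ℝ v w0 with hs
    have hw0n : ‖w0‖ = 1 := by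
      have := h𝒦s hw0K
      simpa [mem_sphere_iff_norm] using this
    have hs1 : s < 1 := by
      have hle : s ≤ 1 := by
        have h := real_inner_le_norm v w0
        rw [hv, hw0n] at h; simpa using h
      rcases lt_or_eq_of_le hle with h | h
      · exact h
      · have hvw0 : v = w0 := (inner_eq_one_iff_of_norm_eq_one hv hw0n).mp h
        exact absurd (hvw0 ▸ hw0K) hvK
    set m : ℝ := max s 0 with hm
    set t : ℝ := R * (m + 1) with ht
    have hm0 : 0 ≤ m := le_max_right _ _
    have hm1 : m < 1 := by simp [hm, hs1]
    have ht0 : 0 < t := by positivity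
    have hx : t • v ∈ ball (R • v) R ∩ (⋂ w ∈ 𝒦, (ball (R • w) R)ᶜ) := by
      constructor
      · rw [mem_ball, dist_eq_norm, ← sub_smul, norm_smul, hv]
        rw [Real.norm_eq_abs, abs_of_nonneg (by nlinarith : (0:ℝ) ≤ t - R)]
        nlinarith
      · simp only [mem_iInter, mem_compl_iff, mem_ball, not_lt]
        intro w hwK
        have hwn : ‖w‖ = 1 := by
          have := h𝒦s hwK
          simpa [mem_sphere_iff_norm] using this
        have hvw : (inner ℝ v w : ℝ) ≤ s := hmax hwK
        rw [dist_eq_norm]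
        have hsq : ‖t • v - R • w‖ ^ 2 = t ^ 2 - 2 * (t * R * inner ℝ v w) + R ^ 2 := by
          rw [@norm_sub_sq_real, norm_smul, norm_smul, hv, hwn,
            real_inner_smul_left, real_inner_smul_right]
          simp [abs_of_pos ht0, abs_of_pos hR]; ring
        have hms : s ≤ m := le_max_left _ _
        have hkey : 2 * R * s ≤ t := by
          rw [ht]
          nlinarith [mul_le_mul_of_nonneg_left hms hR.le,
            mul_le_mul_of_nonneg_left hm1.le hR.le]
        nlinarith [norm_nonneg (t • v - R • w),
          mul_le_mul_of_nonneg_left hvw (le_of_lt ht0),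
          mul_le_mul_of_nonneg_left hkey (le_of_lt ht0)]
    rw [hdisj] at hx
    exact hx
  refine ⟨key, ?_⟩
  ext v
  constructor
  · rintro ⟨hv1, hvsub⟩
    refine key v hv1 ?_
    rw [zero_add] at hvsub
    ext x
    simp only [mem_inter_iff, mem_empty_iff_false, iff_false, not_and]
    intro hx1 hx2
    exact hvsub hx2 hx1
  · intro hvK
    refine ⟨by simpa [mem_sphere_iff_norm] using h𝒦s hvK, ?_⟩
    rw [zero_add]
    exact fun x hx => by
      simp only [mem_iInter, mem_compl_iff] at hx ⊢
      exact hx v hvK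
end
end
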